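/- arXiv:1908.05190 — 10 statements merged into one kernel-verified Lean document; each statement's English description precedes it below -/
import Mathlib

section
/- Let q be a prime power and t > 2 an integer. There is no proper subfield of F_{q^{t-1}} containing the set N⁻¹(1) = {X ∈ F_{q^{t-1}} : N(X) = 1}, where N is the field norm from F_{q^{t-1}} to F_q. -/
/-- For `t > 2` no proper subfield of `F_{q^{t-1}}` contains the set `N⁻¹(1)` where
`N(X) = ∏_{i=0}^{t-2} X^(q^i)` is the norm to `F_q`. -/
theorem stmt_2 (p k q t : ℕ) (hp : Nat.Prime p) (hk : 0 < k) (hq : q = p ^ k)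
    (ht : 2 < t)
    (L : Type) [Field L] [Fintype L] (hL : Fintype.card L = q ^ (t - 1))
    (F : Subfield L)
    (hF : ∀ X : L, (∏ i ∈ Finset.range (t - 1), X ^ q ^ i) = 1 → X ∈ F) :
    F = ⊤ := by
  classical
  have hq1 : 1 < q := by
    subst hq; exact Nat.one_lt_pow hk.ne' hp.one_lt
  set n := t - 1 with hn
  have hn2 : 2 ≤ n := by omega
  set E : ℕ := ∑ i ∈ Finset.range n, q ^ i with hE
  -- `E * (q - 1) = q ^ n - 1`
  have hqn1 : 1 ≤ q ^ n := Nat.one_le_pow _ _ (by omega)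
  have hEd : E * (q - 1) = q ^ n - 1 := by
    have h := geom_sum_mul (q : ℤ) n
    have : (E : ℤ) * ((q : ℤ) - 1) = (q : ℤ) ^ n - 1 := by
      rw [hE]; push_cast; exact h
    zify [Nat.one_le_of_lt hq1, hqn1]
    exact this
  -- restated hypothesis
  have hF' : ∀ X : L, X ^ E = 1 → X ∈ F := by
    intro X h
    apply hF X
    rw [Finset.prod_pow_eq_pow_sum]
    exact h
  -- a generator of the unit group
  obtain ⟨ζ, hζ⟩ := IsCyclic.exists_generator (α := Lˣ)
  have hord : orderOf ζ = q ^ n - 1 := by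
    rw [orderOf_eq_card_of_forall_mem_zpowers hζ, Nat.card_eq_fintype_card,
      Fintype.card_units, hL]
  set a : Lˣ := ζ ^ (q - 1) with ha
  have horda : orderOf a = E := by
    rw [ha, orderOf_pow_of_dvd (x := ζ) (n := q - 1) (by omega)
      (by rw [hord, ← hEd]; exact dvd_mul_left _ _), hord, ← hEd,
      Nat.mul_div_cancel _ (by omega)]
  -- every element of `zpowers a` lies in `F`
  have hmem : ∀ x : Lˣ, x ∈ Subgroup.zpowers a → ((x : L) ∈ F) := by
    intro x hx
    apply hF'
    have hxE : x ^ E = 1 :=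
      orderOf_dvd_iff_pow_eq_one.mp (horda ▸ orderOf_dvd_of_mem_zpowers hx)
    rw [← Units.val_pow_eq_pow_val, hxE, Units.val_one]
  haveI : Fintype F := Fintype.ofFinite F
  -- `E ≤ card F`
  have hcardF : E ≤ Fintype.card F := by
    have hinj : Function.Injective
        (fun x : Subgroup.zpowers a => (⟨(x : Lˣ), hmem _ x.2⟩ : F)) := by
      intro x y hxy
      apply Subtype.ext
      apply Units.ext
      exact congrArg Subtype.val hxy
    calc E = Fintype.card (Subgroup.zpowers a) := by
            rw [Fintype.card_zpowers, horda]
      _ ≤ Fintype.card F := Fintype.card_le_of_injective _ hinj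
  -- E is large
  have hElarge : q ^ (n - 1) + 1 ≤ E := by
    have h1 : E = (∑ i ∈ Finset.range (n - 1), q ^ i) + q ^ (n - 1) := by
      rw [hE]
      rw [show n = (n - 1) + 1 by omega, Finset.sum_range_succ]
      simp
    have h2 : (1 : ℕ) ≤ ∑ i ∈ Finset.range (n - 1), q ^ i := by
      calc (1 : ℕ) = q ^ 0 := by norm_num
        _ ≤ ∑ i ∈ Finset.range (n - 1), q ^ i :=
          Finset.single_le_sum (f := fun i => q ^ i) (fun _ _ => Nat.zero_le _)
            (Finset.mem_range.mpr (by omega))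
    omega
  -- card of L over F
  have hpow : Fintype.card L = Fintype.card F ^ Module.finrank F L :=
    Module.card_eq_pow_finrank (K := F) (V := L)
  set m := Module.finrank F L with hm
  have hm0 : m ≠ 0 := by
    intro h
    rw [h, pow_zero, hL] at hpow
    have : 2 ≤ q ^ n := le_trans (by omega) (Nat.le_self_pow (by omega) q)
    omega
  have hm1 : m = 1 := by
    by_contra hne
    have hm2 : 2 ≤ m := by omega
    have h2 : Fintype.card F ^ 2 ≤ q ^ n := by
      calc Fintype.card F ^ 2 ≤ Fintype.card F ^ m :=
            Nat.pow_le_pow_right Fintype.card_pos hm2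
        _ = q ^ n := by rw [← hpow, hL]
    have h3 : q ^ n ≤ q ^ (2 * (n - 1)) := Nat.pow_le_pow_right (by omega) (by omega)
    have h4 : q ^ (2 * (n - 1)) = (q ^ (n - 1)) ^ 2 := by
      rw [← pow_mul, Nat.mul_comm]
    have h5 : (q ^ (n - 1)) ^ 2 < (q ^ (n - 1) + 1) ^ 2 :=
      Nat.pow_lt_pow_left (by omega) (by norm_num)
    have h6 : (q ^ (n - 1) + 1) ^ 2 ≤ Fintype.card F ^ 2 :=
      Nat.pow_le_pow_left (le_trans hElarge hcardF) 2
    omega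
  -- hence `card F = card L`, so `F = ⊤`
  have hcards : Fintype.card F = Fintype.card L := by
    rw [hpow, hm1, pow_one]
  have hbij : Function.Bijective (fun y : F => (y : L)) :=
    (Fintype.bijective_iff_injective_and_card _).mpr ⟨Subtype.val_injective, hcards⟩
  apply Subfield.ext
  intro x
  constructor
  · intro _; exact Subfield.mem_top x
  · intro _
    obtain ⟨y, hy⟩ := hbij.2 x
    exact hy ▸ y.2
end

section
/- Let q be a prime power and t ≥ 2. In the projective norm graph NG(q,t), for any two vertices (A₁,a₁), (A₂,a₂) with A₁ ≠ A₂, the number of common neighbours equals (q^{t-1}−1)/(q−1) − 1 if a₁ = a₂, and (q^{t-1}−1)/(q−1) if a₁ ≠ a₂. -/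
open Polynomial in
lemma aux_fix (q : ℕ) (hq2 : 1 < q) (K L : Type) [Field K] [Fintype K] [Field L] [Fintype L]
    [Algebra K L] (hK : Fintype.card K = q) (z : L) (hz : z ^ q = z) :
    ∃ a : K, algebraMap K L a = z := by
  classical
  set φ := algebraMap K L with hφdef
  have hφ : Function.Injective φ := (algebraMap K L).injective
  set P : Polynomial L := X ^ q - X with hP
  have hPne : P ≠ 0 := FiniteField.X_pow_card_sub_X_ne_zero L hq2
  have hroot : ∀ w : L, w ^ q = w → w ∈ P.roots.toFinset := by
    intro w hw
    rw [Multiset.mem_toFinset, Polynomial.mem_roots hPne]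
    simp [hP, Polynomial.IsRoot, sub_eq_zero, hw]
  have himsub : Finset.univ.image φ ⊆ P.roots.toFinset := by
    intro w hw
    obtain ⟨a, -, rfl⟩ := Finset.mem_image.mp hw
    apply hroot
    rw [← map_pow, ← hK, FiniteField.pow_card]
  have hcard1 : (Finset.univ.image φ).card = q := by
    rw [Finset.card_image_of_injective _ hφ, Finset.card_univ, hK]
  have hcard2 : P.roots.toFinset.card ≤ q := by
    refine le_trans (Multiset.toFinset_card_le _) (le_trans (Polynomial.card_roots' P) ?_)
    rw [hP, FiniteField.X_pow_card_sub_X_natDegree_eq L hq2]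
  have heq : Finset.univ.image φ = P.roots.toFinset :=
    Finset.eq_of_subset_of_card_le himsub (by rw [hcard1]; exact hcard2)
  have hz2 := hroot z hz
  rw [← heq, Finset.mem_image] at hz2
  obtain ⟨a, -, ha⟩ := hz2
  exact ⟨a, ha⟩

lemma aux_count (q m : ℕ) (hq2 : 1 < q) (hm : 0 < m) (L : Type) [Field L] [Fintype L]
    [DecidableEq L]
    (hn : Fintype.card Lˣ = m * (q - 1)) (e : L) (he : e ≠ 0) (heq : e ^ (q - 1) = 1) :
    Nat.card {u : L // u ^ m = e ∧ u ≠ 1} = if e = 1 then m - 1 else m := by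
  classical
  have hq1 : 0 < q - 1 := by omega
  obtain ⟨g, hg⟩ := IsCyclic.exists_generator (α := Lˣ)
  have hord : orderOf g = m * (q - 1) := by
    rw [orderOf_eq_card_of_forall_mem_zpowers hg, Nat.card_eq_fintype_card, hn]
  -- primitive m-th root of unity
  have hordz : orderOf (g ^ (q - 1)) = m := by
    rw [orderOf_pow, hord, Nat.gcd_eq_right (dvd_mul_left _ _), Nat.mul_div_cancel _ hq1]
  have hz : IsPrimitiveRoot ((g ^ (q - 1) : Lˣ) : L) m := by
    have h1 := IsPrimitiveRoot.orderOf (g ^ (q - 1))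
    rw [hordz] at h1
    exact IsPrimitiveRoot.coe_units_iff.mpr h1
  -- existence of an m-th root of e
  have hu1 : (Units.mk0 e he) ^ (q - 1) = 1 := Units.ext (by simpa using heq)
  obtain ⟨j, hj0⟩ := mem_powers_iff_mem_zpowers.mpr (hg (Units.mk0 e he))
  have hj : g ^ j = Units.mk0 e he := hj0
  have hdvd : orderOf g ∣ j * (q - 1) := orderOf_dvd_of_pow_eq_one (by rw [pow_mul, hj, hu1])
  rw [hord] at hdvd
  obtain ⟨j', rfl⟩ := (Nat.mul_dvd_mul_iff_right hq1).mp hdvd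
  have hj : g ^ (m * j') = Units.mk0 e he := hj0
  have ha : ((g ^ j' : Lˣ) : L) ^ m = e := by
    rw [← Units.val_pow_eq_pow_val, ← pow_mul, mul_comm j' m, hj, Units.val_mk0]
  -- the finset of m-th roots of e
  set F : Finset L := (Polynomial.nthRoots m e).toFinset with hFdef
  have hF : ∀ u : L, u ∈ F ↔ u ^ m = e := fun u => by
    rw [hFdef, Multiset.mem_toFinset, Polynomial.mem_nthRoots hm]
  have hFcard : F.card = m := by
    rw [hFdef, Multiset.toFinset_card_of_nodup (hz.nthRoots_nodup he), hz.card_nthRoots,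
      if_pos ⟨_, ha⟩]
  have hsub : Nat.card {u : L // u ^ m = e ∧ u ≠ 1} = (F.erase 1).card := by
    rw [Nat.card_congr (Equiv.subtypeEquivRight (q := fun u => u ∈ F.erase 1)
      (fun u => by show u ^ m = e ∧ u ≠ 1 ↔ u ∈ F.erase 1; rw [Finset.mem_erase, hF]; tauto)), Nat.card_eq_fintype_card,
      Fintype.card_coe]
  rw [hsub]
  by_cases h1 : e = 1
  · rw [if_pos h1, Finset.card_erase_of_mem ((hF 1).mpr (by rw [one_pow, h1])), hFcard]
  · rw [if_neg h1, Finset.erase_eq_of_notMem (fun hmem => h1 (by simpa using ((hF 1).mp hmem).symm)),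
      hFcard]

/-- Common degree of a generic pair of vertices in the projective norm graph `NG(q,t)`. -/
theorem stmt_3 (p k q t : ℕ) (hp : Nat.Prime p) (hk : 0 < k) (hq : q = p ^ k)
    (ht : 2 ≤ t)
    (K L : Type) [Field K] [Fintype K] [DecidableEq K] [Field L] [Fintype L] [Algebra K L]
    (hK : Fintype.card K = q) (hL : Fintype.card L = q ^ (t - 1))
    (A₁ A₂ : L) (a₁ a₂ : K) (hA : A₁ ≠ A₂) (ha₁ : a₁ ≠ 0) (ha₂ : a₂ ≠ 0) :
    Nat.card {v : L × K // v.2 ≠ 0 ∧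
        (∏ i ∈ Finset.range (t - 1), (A₁ + v.1) ^ q ^ i) = algebraMap K L (a₁ * v.2) ∧
        (∏ i ∈ Finset.range (t - 1), (A₂ + v.1) ^ q ^ i) = algebraMap K L (a₂ * v.2)}
      = (if a₁ = a₂ then (q ^ (t - 1) - 1) / (q - 1) - 1
         else (q ^ (t - 1) - 1) / (q - 1)) := by
  classical
  have hq2 : 1 < q := hq ▸ Nat.one_lt_pow hk.ne' hp.one_lt
  have hq1 : 0 < q - 1 := by omega
  set φ := algebraMap K L with hφdef
  have hφ : Function.Injective φ := RingHom.injective φ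
  simp only [Finset.prod_pow_eq_pow_sum]
  set m : ℕ := ∑ i ∈ Finset.range (t - 1), q ^ i with hmdef
  have ht1 : 0 < t - 1 := by omega
  have hm0 : 0 < m := by
    rw [hmdef]
    exact Finset.sum_pos (fun i _ => Nat.pow_pos (n := i) (by omega))
      ⟨0, Finset.mem_range.mpr ht1⟩
  have hmn : m * (q - 1) = q ^ (t - 1) - 1 := by
    have hdvd : (q - 1) ∣ q ^ (t - 1) - 1 := by
      simpa using Nat.sub_dvd_pow_sub_pow q 1 (t - 1)
    rw [hmdef, Nat.geomSum_eq hq2, Nat.div_mul_cancel hdvd]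
  have hRHS : (q ^ (t - 1) - 1) / (q - 1) = m := by
    rw [hmdef, Nat.geomSum_eq hq2]
  -- norms land in K
  have hnorm : ∀ x : L, ∃ c : K, φ c = x ^ m := by
    intro x
    rcases eq_or_ne x 0 with rfl | hx
    · exact ⟨0, by rw [map_zero, zero_pow hm0.ne']⟩
    · apply aux_fix q hq2 K L hK
      have hmq : m * q = (q ^ (t - 1) - 1) + m := by
        calc m * q = m * (q - 1 + 1) := by rw [Nat.sub_add_cancel (by omega)]
          _ = (q ^ (t - 1) - 1) + m := by rw [Nat.mul_add, hmn, mul_one]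
      rw [← pow_mul, hmq, pow_add, ← hL, FiniteField.pow_card_sub_one_eq_one x hx, one_mul]
  set e : K := a₁ * a₂⁻¹ with hedef
  have he0 : e ≠ 0 := mul_ne_zero ha₁ (inv_ne_zero ha₂)
  set ebar : L := φ e with hebardef
  have heb : ebar ≠ 0 := fun h => he0 (hφ (h.trans (map_zero φ).symm))
  have heq : ebar ^ (q - 1) = 1 := by
    rw [hebardef, ← map_pow, ← hK, FiniteField.pow_card_sub_one_eq_one e he0, map_one]
  have hn : Fintype.card Lˣ = m * (q - 1) := by rw [Fintype.card_units, hL, hmn]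
  have hcount := aux_count q m hq2 hm0 L hn ebar heb heq
  have hiff : ebar = 1 ↔ a₁ = a₂ := by
    rw [hebardef, ← map_one φ]
    constructor
    · intro h
      have := hφ h
      rw [hedef, mul_inv_eq_one₀ ha₂] at this
      exact this
    · intro h; rw [hedef, h, mul_inv_cancel₀ ha₂]
  -- the main bijection
  have key : ∀ u : L, u ^ m = ebar → u ≠ 1 →
      ((((A₁ - A₂) / (u - 1) - A₂ : L), a₂⁻¹ * Classical.choose (hnorm ((A₁ - A₂) / (u - 1)))) :
        L × K).2 ≠ 0 ∧
      (A₁ + ((A₁ - A₂) / (u - 1) - A₂)) ^ m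
        = φ (a₁ * (a₂⁻¹ * Classical.choose (hnorm ((A₁ - A₂) / (u - 1))))) ∧
      (A₂ + ((A₁ - A₂) / (u - 1) - A₂)) ^ m
        = φ (a₂ * (a₂⁻¹ * Classical.choose (hnorm ((A₁ - A₂) / (u - 1))))) := by
    intro u hu hu1
    have hd : A₁ - A₂ ≠ 0 := sub_ne_zero.mpr hA
    have hu1' : u - 1 ≠ 0 := sub_ne_zero.mpr hu1
    set x : L := (A₁ - A₂) / (u - 1) with hxdef
    have hx : x ≠ 0 := div_ne_zero hd hu1'
    have hc := Classical.choose_spec (hnorm x)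
    set c : K := Classical.choose (hnorm x) with hcdef
    have hc0 : c ≠ 0 := fun h => (pow_ne_zero m hx) (by rw [← hc, h, map_zero])
    refine ⟨mul_ne_zero (inv_ne_zero ha₂) hc0, ?_, ?_⟩
    · have hA1 : A₁ + (x - A₂) = u * x := by
        have h5 : (u - 1) * x = A₁ - A₂ := by
          rw [hxdef, mul_div_assoc', mul_comm, mul_div_assoc, div_self hu1', mul_one]
        linear_combination -h5
      rw [hA1, mul_pow, hu, hebardef, ← hc, ← map_mul]
      congr 1
      rw [hedef]
      field_simp
    · have hA2 : A₂ + (x - A₂) = x := by ring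
      rw [hA2, ← hc]
      congr 1
      rw [← mul_assoc, mul_inv_cancel₀ ha₂, one_mul]
  set f : {u : L // u ^ m = ebar ∧ u ≠ 1} →
      {v : L × K // v.2 ≠ 0 ∧ (A₁ + v.1) ^ m = φ (a₁ * v.2) ∧
        (A₂ + v.1) ^ m = φ (a₂ * v.2)} :=
    fun u => ⟨(((A₁ - A₂) / (u.1 - 1) - A₂ : L),
      a₂⁻¹ * Classical.choose (hnorm ((A₁ - A₂) / (u.1 - 1)))), key u.1 u.2.1 u.2.2⟩ with hfdef
  have hf : Function.Bijective f := by
    constructor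
    · rintro ⟨u, hu, hu1⟩ ⟨v, hv, hv1⟩ h
      have hd : A₁ - A₂ ≠ 0 := sub_ne_zero.mpr hA
      simp only [hfdef, Subtype.mk.injEq, Prod.mk.injEq] at h
      have h1 : (A₁ - A₂) / (u - 1) = (A₁ - A₂) / (v - 1) := by
        have := h.1
        linear_combination this
      have h2 : (u - 1)⁻¹ = (v - 1)⁻¹ := by
        apply mul_left_cancel₀ hd
        rw [← div_eq_mul_inv, ← div_eq_mul_inv]
        exact h1
      have h3 : u - 1 = v - 1 := inv_injective h2
      exact Subtype.ext (by linear_combination h3)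
    · rintro ⟨⟨B, b⟩, hb, h1, h2⟩
      have hd : A₁ - A₂ ≠ 0 := sub_ne_zero.mpr hA
      have hxm : (A₂ + B) ^ m ≠ 0 := by
        rw [h2]
        exact fun h => mul_ne_zero ha₂ hb (hφ (h.trans (map_zero φ).symm))
      have hx : A₂ + B ≠ 0 := fun h => hxm (by rw [h, zero_pow hm0.ne'])
      have hym : (A₁ + B) ^ m ≠ 0 := by
        rw [h1]
        exact fun h => mul_ne_zero ha₁ hb (hφ (h.trans (map_zero φ).symm))
      have hy : A₁ + B ≠ 0 := fun h => hym (by rw [h, zero_pow hm0.ne'])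
      set u : L := (A₁ + B) / (A₂ + B) with hudef
      have hum : u ^ m = ebar := by
        rw [hudef, div_pow, h1, h2, ← map_div₀, hebardef]
        congr 1
        rw [hedef]
        field_simp
      have hu1 : u ≠ 1 := by
        intro h
        rw [hudef, div_eq_one_iff_eq hx] at h
        exact hA (by linear_combination h)
      refine ⟨⟨u, hum, hu1⟩, ?_⟩
      have h4 : u - 1 = (A₁ - A₂) / (A₂ + B) := by
        rw [hudef, div_sub_one hx]
        congr 1
        ring
      have hxx : (A₁ - A₂) / (u - 1) = A₂ + B := by
        rw [h4, div_div_eq_mul_div, mul_comm, mul_div_assoc, div_self hd, mul_one]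
      have hc := Classical.choose_spec (hnorm ((A₁ - A₂) / (u - 1)))
      rw [hfdef]
      apply Subtype.ext
      simp only [Prod.mk.injEq]
      constructor
      · rw [hxx]; ring
      · have hceq : Classical.choose (hnorm ((A₁ - A₂) / (u - 1))) = a₂ * b := by
          apply hφ
          rw [hc, hxx, h2]
        rw [hceq, ← mul_assoc, inv_mul_cancel₀ ha₂, one_mul]
  rw [← Nat.card_eq_of_bijective f hf, hcount, hRHS]
  by_cases haa : a₁ = a₂
  · rw [if_pos haa, if_pos (hiff.mpr haa)]
  · rw [if_neg haa, if_neg (fun h => haa (hiff.mp h))]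
end

section
/- Let q be a prime power, t ≥ 3, and c₁, c₂ ∈ F_q*. Set S_t(c₁,c₂) = {X ∈ F_{q^{t-1}} : N(X) = c₁ and N(X+1) = c₂}, where N is the norm from F_{q^{t-1}} to F_q. Then every X ∈ S_t(c₁,c₂) is a root of the polynomial f(Y) = n_{t-2}(Y+1)·n_{t-2}(Y) + c₁·n_{t-2}(Y+1) − c₂·n_{t-2}(Y), where n_{t-2}(Y) = Y^{q^{t-3}+q^{t-4}+⋯+1}. -/
/-- Every element of `S_t(c₁,c₂)` is a root of
`f(Y) = n_{t-2}(Y+1)·n_{t-2}(Y) + c₁·n_{t-2}(Y+1) − c₂·n_{t-2}(Y)`. -/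
theorem stmt_5 (p k q t : ℕ) (hp : Nat.Prime p) (hk : 0 < k) (hq : q = p ^ k)
    (ht : 3 ≤ t)
    (K L : Type) [Field K] [Fintype K] [Field L] [Fintype L] [Algebra K L]
    (hK : Fintype.card K = q) (hL : Fintype.card L = q ^ (t - 1))
    (c₁ c₂ : K) (hc₁ : c₁ ≠ 0) (hc₂ : c₂ ≠ 0)
    (X : L)
    (h1 : (∏ i ∈ Finset.range (t - 1), X ^ q ^ i) = algebraMap K L c₁)
    (h2 : (∏ i ∈ Finset.range (t - 1), (X + 1) ^ q ^ i) = algebraMap K L c₂) :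
    (X + 1) ^ (∑ i ∈ Finset.range (t - 2), q ^ i) * X ^ (∑ i ∈ Finset.range (t - 2), q ^ i)
      + algebraMap K L c₁ * (X + 1) ^ (∑ i ∈ Finset.range (t - 2), q ^ i)
      - algebraMap K L c₂ * X ^ (∑ i ∈ Finset.range (t - 2), q ^ i) = 0 := by
  haveI : Fact p.Prime := ⟨hp⟩
  have hcard : Fintype.card L = p ^ (k * (t - 1)) := by
    rw [hL, hq, ← pow_mul]
  have hpos : 0 < k * (t - 1) := Nat.mul_pos hk (by omega)
  have hdvd : p ∣ Fintype.card L := by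
    rw [hcard]; exact dvd_pow_self p hpos.ne'
  have hchar : p ∣ ringChar L := (prime_dvd_char_iff_dvd_card p).mpr hdvd
  have hrc : ringChar L = p :=
    ((Nat.prime_dvd_prime_iff_eq hp (CharP.char_is_prime L (ringChar L))).mp hchar).symm
  haveI : CharP L p := hrc ▸ ringChar.charP L
  -- rewrite norms
  have hsucc : t - 1 = (t - 2) + 1 := by omega
  have key : ∀ Y : L, (∏ i ∈ Finset.range (t - 1), Y ^ q ^ i)
      = Y ^ (∑ i ∈ Finset.range (t - 2), q ^ i) * Y ^ q ^ (t - 2) := by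
    intro Y
    rw [Finset.prod_pow_eq_pow_sum, hsucc, Finset.sum_range_succ, pow_add]
  rw [key] at h1 h2
  have hfrob : (X + 1) ^ q ^ (t - 2) = X ^ q ^ (t - 2) + 1 := by
    rw [hq, ← pow_mul, add_pow_char_pow, one_pow]
  rw [hfrob] at h2
  rw [← h1, ← h2]
  ring
end

section
/- Let q be a prime power, t ≥ 3, c₁, c₂ ∈ F_q*. Every X ∈ S_t(c₁,c₂) ∩ F_q is a multiple root (root of multiplicity at least 2) of the polynomial f(Y) = n_{t-2}(Y+1)·n_{t-2}(Y) + c₁·n_{t-2}(Y+1) − c₂·n_{t-2}(Y) over the algebraic closure of F_q. -/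
/-- Every element of `S_t(c₁,c₂) ∩ F_q` is a multiple root (a common root of `f` and `f'`) of
`f(Y) = n_{t-2}(Y+1)·n_{t-2}(Y) + c₁·n_{t-2}(Y+1) − c₂·n_{t-2}(Y)`. -/
theorem stmt_6 (p k q t : ℕ) (hp : Nat.Prime p) (hk : 0 < k) (hq : q = p ^ k)
    (ht : 3 ≤ t)
    (K L : Type) [Field K] [Fintype K] [Field L] [Fintype L] [Algebra K L]
    (hK : Fintype.card K = q) (hL : Fintype.card L = q ^ (t - 1))
    (c₁ c₂ : K) (hc₁ : c₁ ≠ 0) (hc₂ : c₂ ≠ 0)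
    (f : Polynomial L)
    (hf : f = (Polynomial.X + 1) ^ (∑ i ∈ Finset.range (t - 2), q ^ i)
              * Polynomial.X ^ (∑ i ∈ Finset.range (t - 2), q ^ i)
            + Polynomial.C (algebraMap K L c₁)
              * (Polynomial.X + 1) ^ (∑ i ∈ Finset.range (t - 2), q ^ i)
            - Polynomial.C (algebraMap K L c₂)
              * Polynomial.X ^ (∑ i ∈ Finset.range (t - 2), q ^ i))
    (X : L) (hmem : X ∈ Set.range (algebraMap K L))
    (h1 : (∏ i ∈ Finset.range (t - 1), X ^ q ^ i) = algebraMap K L c₁)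
    (h2 : (∏ i ∈ Finset.range (t - 1), (X + 1) ^ q ^ i) = algebraMap K L c₂) :
    f.eval X = 0 ∧ (Polynomial.derivative f).eval X = 0 := by
  obtain ⟨x, hx⟩ := hmem
  -- (q : L) = 0
  have hq0 : (q : L) = 0 := by
    have h := FiniteField.cast_card_eq_zero K
    rw [hK] at h
    have : (q : L) = algebraMap K L (q : K) := by rw [map_natCast]
    rw [this, h, map_zero]
  have hXq : X ^ q = X := by
    rw [← hx, ← map_pow]
    congr 1
    rw [← hK]; exact FiniteField.pow_card x
  have hX1q : (X + 1) ^ q = X + 1 := by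
    have : X + 1 = algebraMap K L (x + 1) := by rw [map_add, map_one, hx]
    rw [this, ← map_pow]
    congr 1
    rw [← hK]; exact FiniteField.pow_card (x + 1)
  have hyi : ∀ (y : L), y ^ q = y → ∀ n, y ^ q ^ n = y := by
    intro y hy n
    induction n with
    | zero => simp
    | succ n ih => rw [pow_succ, pow_mul, ih, hy]
  have key : ∀ (y : L), y ^ q = y → ∀ (n : ℕ) (g : ℕ → ℕ),
      y ^ (∑ i ∈ Finset.range n, q ^ g i) = y ^ n := by
    intro y hy n g
    rw [← Finset.prod_pow_eq_pow_sum]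
    calc ∏ i ∈ Finset.range n, y ^ q ^ g i
        = ∏ _i ∈ Finset.range n, y :=
          Finset.prod_congr rfl (fun i _ => hyi y hy (g i))
      _ = y ^ n := by rw [Finset.prod_const, Finset.card_range]
  have hc1 : X ^ (t - 1) = algebraMap K L c₁ := by
    rw [← h1, Finset.prod_congr rfl (fun i _ => hyi X hXq i),
      Finset.prod_const, Finset.card_range]
  have hc2 : (X + 1) ^ (t - 1) = algebraMap K L c₂ := by
    rw [← h2, Finset.prod_congr rfl (fun i _ => hyi (X + 1) hX1q i),
      Finset.prod_const, Finset.card_range]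
  obtain ⟨m, rfl⟩ : ∃ m, t = m + 3 := ⟨t - 3, by omega⟩
  have ht2 : m + 3 - 2 = m + 1 := by omega
  have ht1 : m + 3 - 1 = m + 2 := by omega
  rw [ht2] at hf
  rw [ht1] at hc1 hc2
  set a : ℕ := ∑ i ∈ Finset.range (m + 1), q ^ i with ha
  -- cast of a is 1
  have haL : ((a : ℕ) : L) = 1 := by
    rw [ha]
    push_cast
    rw [Finset.sum_range_succ']
    simp [hq0]
  -- a - 1
  have ha1 : a - 1 = ∑ i ∈ Finset.range m, q ^ (i + 1) := by
    rw [ha, Finset.sum_range_succ']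
    simp
  have hXa : X ^ a = X ^ (m + 1) := key X hXq (m + 1) (fun i => i)
  have hX1a : (X + 1) ^ a = (X + 1) ^ (m + 1) := key (X + 1) hX1q (m + 1) (fun i => i)
  have hXa1 : X ^ (a - 1) = X ^ m := by
    rw [ha1]; exact key X hXq m (fun i => i + 1)
  have hX1a1 : (X + 1) ^ (a - 1) = (X + 1) ^ m := by
    rw [ha1]; exact key (X + 1) hX1q m (fun i => i + 1)
  subst hf
  constructor
  · simp only [Polynomial.eval_sub, Polynomial.eval_add, Polynomial.eval_mul,
      Polynomial.eval_pow, Polynomial.eval_X, Polynomial.eval_one, Polynomial.eval_C]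
    rw [hXa, hX1a, ← hc1, ← hc2]
    ring
  · simp only [Polynomial.derivative_sub, Polynomial.derivative_add,
      Polynomial.derivative_mul, Polynomial.derivative_C, Polynomial.derivative_pow,
      Polynomial.derivative_X, Polynomial.derivative_one, Polynomial.eval_sub,
      Polynomial.eval_add, Polynomial.eval_mul, Polynomial.eval_pow, Polynomial.eval_X,
      Polynomial.eval_one, Polynomial.eval_C, Polynomial.eval_natCast,
      Polynomial.derivative_add, zero_mul, mul_zero, add_zero, zero_add, mul_one]
    rw [hXa, hX1a, hXa1, hX1a1, haL, ← hc1, ← hc2]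
    ring
end

section
/- Let q be an odd prime power. The number of X ∈ F_{q³} with N(X) = 1 and N(X+1) = −1 equals 2q + 1 − η(−3), where N is the norm from F_{q³} to F_q and η is the quadratic character of F_q. -/
open Polynomial


lemma aux_charP (K : Type) [Field K] [Fintype K] {p q k : ℕ} (hp : p.Prime)
    (hk : 0 < k) (hq : q = p ^ k) (hK : Fintype.card K = q) : CharP K p := by
  have h0 : ((q : ℕ) : K) = 0 := by rw [← hK]; exact FiniteField.cast_card_eq_zero K
  have hpK : ((p : ℕ) : K) = 0 := by
    have h1 : ((p : K)) ^ k = 0 := by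
      rw [← Nat.cast_pow, ← hq]; exact_mod_cast h0
    exact pow_eq_zero_iff hk.ne' |>.mp h1
  have hdvd : ringChar K ∣ p := (CharP.cast_eq_zero_iff K (ringChar K) p).mp hpK
  have hchar : ringChar K = p := by
    rcases (Nat.Prime.eq_one_or_self_of_dvd hp _ hdvd) with h | h
    · exact absurd h CharP.ringChar_ne_one
    · exact h
  rw [← hchar]; exact ringChar.charP K

lemma aux_fixed {K L : Type} [Field K] [Fintype K] [Field L] [Fintype L] [Algebra K L]
    {q : ℕ} (hq2 : 1 < q) (hK : Fintype.card K = q) (x : L) (hx : x ^ q = x) :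
    ∃ y : K, algebraMap K L y = x := by
  classical
  set f : L[X] := X ^ q - X with hf
  have h1 : (X : L[X]).degree < ((X : L[X]) ^ q).degree := by
    rw [degree_X, degree_X_pow]; exact_mod_cast hq2
  have hdeg : f.degree = q := by rw [hf, degree_sub_eq_left_of_degree_lt h1, degree_X_pow]
  have hfne : f ≠ 0 := fun h => by simp [h] at hdeg
  set T : Finset L := Finset.univ.filter (fun x => x ^ q = x) with hT
  set I : Finset L := Finset.image (algebraMap K L) Finset.univ with hI
  have hIT : I ⊆ T := by
    intro z hz
    rw [hI, Finset.mem_image] at hz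
    obtain ⟨y, _, rfl⟩ := hz
    have : y ^ q = y := by rw [← hK]; exact FiniteField.pow_card y
    simp [hT, ← map_pow, this]
  have hTcard : T.card ≤ q := by
    have hsub : T ⊆ f.roots.toFinset := by
      intro z hz
      rw [hT, Finset.mem_filter] at hz
      rw [Multiset.mem_toFinset, mem_roots hfne]
      simp [hf, IsRoot, hz.2]
    calc T.card ≤ f.roots.toFinset.card := Finset.card_le_card hsub
      _ ≤ Multiset.card f.roots := Multiset.toFinset_card_le _
      _ ≤ f.natDegree := f.card_roots' 
      _ = q := natDegree_eq_of_degree_eq_some hdeg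
  have hIcard : I.card = q := by
    rw [hI, Finset.card_image_of_injective _ (algebraMap K L).injective, Finset.card_univ, hK]
  have hEq : I = T := Finset.eq_of_subset_of_card_le hIT (by rw [hIcard]; exact hTcard)
  have hxT : x ∈ T := by simp [hT, hx]
  rw [← hEq, hI, Finset.mem_image] at hxT
  obtain ⟨y, _, hy⟩ := hxT
  exact ⟨y, hy⟩

lemma aux_card_roots {L : Type} [Field L] [Fintype L] [DecidableEq L] {p : ℕ} [Fact p.Prime] [CharP L p]
    (g : L[X]) (hg0 : g ≠ 0) (hdvd : g ∣ (X ^ (Fintype.card L) - X)) :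
    g.roots.toFinset.card = g.natDegree := by
  classical
  set f : L[X] := X ^ (Fintype.card L) - X with hf
  have hfne : f ≠ 0 := FiniteField.X_pow_card_sub_X_ne_zero L Fintype.one_lt_card
  have hfsplits : f.Splits := by
    rw [splits_iff_card_roots, hf, FiniteField.roots_X_pow_card_sub_X, ← Finset.card_def,
      Finset.card_univ, FiniteField.X_pow_card_sub_X_natDegree_eq L Fintype.one_lt_card]
  have hgsplits : g.Splits := hfsplits.of_dvd hfne hdvd
  have hsep : g.Separable := by
    obtain ⟨n, hpp, hcard⟩ := FiniteField.card L p
    have : f.Separable := by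
      rw [hf, hcard]
      exact galois_poly_separable p _ (dvd_pow dvd_rfl n.2.ne')
    exact this.of_dvd hdvd
  rw [Multiset.toFinset_card_of_nodup (nodup_roots hsep)]
  exact (splits_iff_card_roots.mp hgsplits)


lemma aux_deg {L : Type} [Field L] {q : ℕ} (w : L[X]) (hw : w.degree < (q + 1 : ℕ))
    (g : L[X]) (hg : g = X ^ (q+1) + w) : g.natDegree = q + 1 ∧ g ≠ 0 := by
  have hlt : w.degree < ((X : L[X]) ^ (q+1)).degree := by rwa [degree_X_pow]
  have hdeg : g.degree = (q + 1 : ℕ) := by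
    rw [hg, degree_add_eq_left_of_degree_lt hlt, degree_X_pow]
  have hne : g ≠ 0 := by intro h; rw [h, degree_zero] at hdeg; exact WithBot.bot_ne_coe hdeg
  exact ⟨natDegree_eq_of_degree_eq_some hdeg, hne⟩

lemma aux_degw1 {L : Type} [Field L] {q : ℕ} (hq : 0 < q) :
    ((X : L[X]) ^ q + 1).degree < (q + 1 : ℕ) := by
  apply lt_of_le_of_lt (degree_add_le _ _)
  rw [degree_X_pow, degree_one, max_lt_iff]
  exact ⟨by exact_mod_cast Nat.lt_succ_self q, by exact_mod_cast Nat.succ_pos q⟩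

lemma aux_degw2 {L : Type} [Field L] {q : ℕ} (hq : 0 < q) :
    ((X : L[X]) + 1).degree < (q + 1 : ℕ) := by
  apply lt_of_le_of_lt (degree_add_le _ _)
  rw [degree_X, degree_one, max_lt_iff]
  exact ⟨by exact_mod_cast Nat.lt_succ_of_le hq, by exact_mod_cast Nat.succ_pos q⟩

lemma aux_dvd1 {L : Type} [Field L] {p k q : ℕ} [Fact p.Prime] [CharP L p]
    (hq : q = p ^ k) (hk : 0 < k) :
    ((X : L[X]) ^ (q+1) + X ^ q + 1) ∣ (X ^ (q^3) - X) := by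
  have hq0 : 0 < q := by rw [hq]; exact pow_pos (Fact.out (p := p.Prime)).pos k
  set g : L[X] := X ^ (q+1) + X ^ q + 1 with hgdef
  obtain ⟨hdeg, hne⟩ := aux_deg (X ^ q + 1) (aux_degw1 hq0) g (by rw [hgdef]; ring)
  have hdeg0 : g.degree ≠ 0 := by
    rw [degree_eq_natDegree hne, hdeg]; exact_mod_cast Nat.succ_ne_zero q
  haveI : Nontrivial (AdjoinRoot g) := AdjoinRoot.nontrivial g hdeg0
  haveI : CharP (AdjoinRoot g) p :=
    charP_of_injective_ringHom (AdjoinRoot.of g).injective p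
  set r : AdjoinRoot g := AdjoinRoot.root g with hr
  have frob : ∀ x y : AdjoinRoot g, (x + y) ^ q = x ^ q + y ^ q := by
    intro x y; rw [hq]; exact add_pow_char_pow x y p k
  have hroot : r ^ (q+1) + r ^ q + 1 = 0 := by
    have h := AdjoinRoot.eval₂_root g
    rw [hgdef] at h
    simpa using h
  have e1 : r * r ^ q + r ^ q + 1 = 0 := by
    rw [pow_succ] at hroot; linear_combination hroot
  set b : AdjoinRoot g := r ^ q
  set c : AdjoinRoot g := b ^ q
  set d : AdjoinRoot g := c ^ q
  have e2 : b * c + c + 1 = 0 := by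
    have h0 : (r * b + b + 1) ^ q = 0 := by rw [e1]; exact zero_pow hq0.ne'
    rw [frob, frob, mul_pow, one_pow] at h0
    exact h0
  have e3 : c * d + d + 1 = 0 := by
    have h0 : (b * c + c + 1) ^ q = 0 := by rw [e2]; exact zero_pow hq0.ne'
    rw [frob, frob, mul_pow, one_pow] at h0
    exact h0
  have f1 : c * r + r + 1 = 0 := by linear_combination (r + 1) * e2 - c * e1
  have hda : d = r := by linear_combination d * f1 - r * e3
  rw [← AdjoinRoot.mk_eq_zero]
  have : AdjoinRoot.mk g ((X : L[X]) ^ (q^3) - X) = r ^ (q^3) - r := by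
    rw [map_sub, map_pow, AdjoinRoot.mk_X]
  rw [this, show q^3 = q*q*q by ring, pow_mul, pow_mul]
  show d - r = 0
  rw [hda, sub_self]

lemma aux_dvd2 {L : Type} [Field L] {p k q : ℕ} [Fact p.Prime] [CharP L p]
    (hq : q = p ^ k) (hk : 0 < k) :
    ((X : L[X]) ^ (q+1) + X + 1) ∣ (X ^ (q^3) - X) := by
  have hq0 : 0 < q := by rw [hq]; exact pow_pos (Fact.out (p := p.Prime)).pos k
  set g : L[X] := X ^ (q+1) + X + 1 with hgdef
  obtain ⟨hdeg, hne⟩ := aux_deg (X + 1) (aux_degw2 hq0) g (by rw [hgdef]; ring)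
  have hdeg0 : g.degree ≠ 0 := by
    rw [degree_eq_natDegree hne, hdeg]; exact_mod_cast Nat.succ_ne_zero q
  haveI : Nontrivial (AdjoinRoot g) := AdjoinRoot.nontrivial g hdeg0
  haveI : CharP (AdjoinRoot g) p :=
    charP_of_injective_ringHom (AdjoinRoot.of g).injective p
  set r : AdjoinRoot g := AdjoinRoot.root g with hr
  have frob : ∀ x y : AdjoinRoot g, (x + y) ^ q = x ^ q + y ^ q := by
    intro x y; rw [hq]; exact add_pow_char_pow x y p k
  have hroot : r ^ (q+1) + r + 1 = 0 := by
    have h := AdjoinRoot.eval₂_root g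
    rw [hgdef] at h
    simpa using h
  have e1 : r * r ^ q + r + 1 = 0 := by
    rw [pow_succ] at hroot; linear_combination hroot
  set b : AdjoinRoot g := r ^ q
  set c : AdjoinRoot g := b ^ q
  set d : AdjoinRoot g := c ^ q
  have e2 : b * c + b + 1 = 0 := by
    have h0 : (r * b + r + 1) ^ q = 0 := by rw [e1]; exact zero_pow hq0.ne'
    rw [frob, frob, mul_pow, one_pow] at h0
    exact h0
  have e3 : c * d + c + 1 = 0 := by
    have h0 : (b * c + b + 1) ^ q = 0 := by rw [e2]; exact zero_pow hq0.ne'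
    rw [frob, frob, mul_pow, one_pow] at h0
    exact h0
  have f1 : c * r + c + 1 = 0 := by linear_combination (c + 1) * e1 - r * e2
  have hda : d = r := by linear_combination (d + 1) * f1 - (r + 1) * e3
  rw [← AdjoinRoot.mk_eq_zero]
  have : AdjoinRoot.mk g ((X : L[X]) ^ (q^3) - X) = r ^ (q^3) - r := by
    rw [map_sub, map_pow, AdjoinRoot.mk_X]
  rw [this, show q^3 = q*q*q by ring, pow_mul, pow_mul]
  show d - r = 0
  rw [hda, sub_self]




/-- `|S₄(1,−1)| = 2q + 1 − η(−3)` for odd `q`, where `N(X) = X^{q²+q+1}` is the norm from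
`F_{q³}` to `F_q` and `η` is the quadratic character of `F_q`. -/
theorem stmt_10 (p k q : ℕ) (hp : Nat.Prime p) (hk : 0 < k) (hq : q = p ^ k)
    (hodd : Odd q)
    (K L : Type) [Field K] [Fintype K] [Field L] [Fintype L] [Algebra K L]
    (hK : Fintype.card K = q) (hL : Fintype.card L = q ^ 3)
    (η : K → ℤ) (hη0 : η 0 = 0)
    (hη1 : ∀ x : K, x ≠ 0 → IsSquare x → η x = 1)
    (hη2 : ∀ x : K, x ≠ 0 → ¬ IsSquare x → η x = -1) :
    (Nat.card {X : L // X ^ (q ^ 2 + q + 1) = 1 ∧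
        (X + 1) ^ (q ^ 2 + q + 1) = -1} : ℤ)
      = 2 * q + 1 - η (-3) := by
  classical
  haveI fp : Fact p.Prime := ⟨hp⟩
  haveI hKp : CharP K p := aux_charP K hp hk hq hK
  haveI hLp : CharP L p := aux_charP L hp (by positivity : 0 < 3*k) (by rw [hq]; ring) hL
  have hq0 : 0 < q := hq ▸ pow_pos hp.pos k
  have hq1 : 1 < q := by rw [hq]; exact Nat.one_lt_pow hk.ne' hp.one_lt
  have hp2 : p ≠ 2 := by
    rintro rfl
    rw [hq] at hodd
    exact (Nat.not_odd_iff_even.mpr (Nat.even_pow.mpr ⟨even_two, hk.ne'⟩)) hodd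
  have frobL : ∀ x y : L, (x + y) ^ q = x ^ q + y ^ q := fun x y => by
    rw [hq]; exact add_pow_char_pow x y p k
  have hsplit : ∀ x : L, x ^ (q^2+q+1) = x * x^q * (x^q)^q := by
    intro x
    rw [show q^2+q+1 = q*q+q+1 by ring, pow_add, pow_add, pow_mul, pow_one]
    ring
  have powL : ∀ x : L, ((x^q)^q)^q = x := by
    intro x
    have h : ((x^q)^q)^q = x^(q^3) := by rw [← pow_mul, ← pow_mul]; ring
    rw [h, ← hL]
    exact FiniteField.pow_card x
  have hpowK : ∀ y : K, y ^ q = y := fun y => by rw [← hK]; exact FiniteField.pow_card y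
  -- the key equivalence
  have key : ∀ X : L, (X ^ (q^2+q+1) = 1 ∧ (X+1)^(q^2+q+1) = -1) ↔
      (X^(q+1) + X^q + 1 = 0 ∨ X^(q+1) + X + 1 = 0) := by
    intro X
    have hps : ∀ Y : L, Y^(q+1) = Y^q * Y := fun Y => pow_succ Y q
    constructor
    · rintro ⟨h1, h2⟩
      rw [hsplit] at h1
      rw [hsplit, frobL, one_pow, frobL, one_pow] at h2
      have hfac : (X * X^q + X^q + 1) * (X * X^q + X + 1) = 0 := by
        linear_combination (X * X^q) * h2 - (X+1)*(X^q+1) * h1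
      rcases mul_eq_zero.mp hfac with h | h
      · left; rw [hps]; linear_combination h
      · right; rw [hps]; linear_combination h
    · intro h
      rcases h with h | h
      · have e1 : X * X^q + X^q + 1 = 0 := by rw [hps] at h; linear_combination h
        have e2 : X^q * (X^q)^q + (X^q)^q + 1 = 0 := by
          have h0 : (X * X^q + X^q + 1)^q = 0 := by rw [e1]; exact zero_pow hq0.ne'
          rw [frobL, frobL, mul_pow, one_pow] at h0; exact h0
        have e3 : (X^q)^q * X + X + 1 = 0 := by
          have h0 : (X^q * (X^q)^q + (X^q)^q + 1)^q = 0 := by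
            rw [e2]; exact zero_pow hq0.ne'
          rw [frobL, frobL, mul_pow, one_pow, powL] at h0; exact h0
        have h1 : X * X^q * (X^q)^q = 1 := by linear_combination (X^q)^q * e1 - e2
        refine ⟨by rw [hsplit]; exact h1, ?_⟩
        rw [hsplit, frobL, one_pow, frobL, one_pow]
        linear_combination h1 + e1 + e2 + e3
      · have e1 : X * X^q + X + 1 = 0 := by rw [hps] at h; linear_combination h
        have e2 : X^q * (X^q)^q + X^q + 1 = 0 := by
          have h0 : (X * X^q + X + 1)^q = 0 := by rw [e1]; exact zero_pow hq0.ne'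
          rw [frobL, frobL, mul_pow, one_pow] at h0; exact h0
        have e3 : (X^q)^q * X + (X^q)^q + 1 = 0 := by
          have h0 : (X^q * (X^q)^q + X^q + 1)^q = 0 := by
            rw [e2]; exact zero_pow hq0.ne'
          rw [frobL, frobL, mul_pow, one_pow, powL] at h0; exact h0
        have h1 : X * X^q * (X^q)^q = 1 := by linear_combination (X^q)^q * e1 - e3
        refine ⟨by rw [hsplit]; exact h1, ?_⟩
        rw [hsplit, frobL, one_pow, frobL, one_pow]
        linear_combination h1 + e1 + e2 + e3
  -- the two root finsets
  set gA : L[X] := X ^ (q+1) + X^q + 1 with hgA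
  set gB : L[X] := X ^ (q+1) + X + 1 with hgB
  obtain ⟨hdegA, hneA⟩ := aux_deg ((X : L[X])^q + 1) (aux_degw1 hq0) gA (by rw [hgA]; ring)
  obtain ⟨hdegB, hneB⟩ := aux_deg ((X : L[X]) + 1) (aux_degw2 hq0) gB (by rw [hgB]; ring)
  set A : Finset L := gA.roots.toFinset with hA
  set B : Finset L := gB.roots.toFinset with hB
  have hmemA : ∀ x : L, x ∈ A ↔ x^(q+1) + x^q + 1 = 0 := by
    intro x
    rw [hA, Multiset.mem_toFinset, mem_roots hneA, IsRoot.def, hgA]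
    simp [eval_add, eval_pow, eval_one, eval_X]
  have hmemB : ∀ x : L, x ∈ B ↔ x^(q+1) + x + 1 = 0 := by
    intro x
    rw [hB, Multiset.mem_toFinset, mem_roots hneB, IsRoot.def, hgB]
    simp [eval_add, eval_pow, eval_one, eval_X]
  have hcardA : A.card = q + 1 := by
    rw [hA, aux_card_roots (p := p) gA hneA (by rw [hL]; exact aux_dvd1 hq hk), hdegA]
  have hcardB : B.card = q + 1 := by
    rw [hB, aux_card_roots (p := p) gB hneB (by rw [hL]; exact aux_dvd2 hq hk), hdegB]
  -- intersection
  have hI : A ∩ B = Finset.univ.filter (fun x : L => x^q = x ∧ x^2 + x + 1 = 0) := by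
    ext x
    rw [Finset.mem_inter, hmemA, hmemB, Finset.mem_filter]
    simp only [Finset.mem_univ, true_and]
    constructor
    · rintro ⟨h1, h2⟩
      have hxq : x^q = x := by linear_combination h1 - h2
      refine ⟨hxq, ?_⟩
      rw [pow_succ, hxq] at h2
      linear_combination h2
    · rintro ⟨h1, h2⟩
      constructor
      · rw [pow_succ, h1]; linear_combination h2
      · rw [pow_succ, h1]; linear_combination h2
  have hcardI : (((A ∩ B).card : ℤ)) = 1 + η (-3) := by
    rw [hI]
    by_cases hp3 : p = 3
    · haveI h3 : CharP K 3 := hp3 ▸ hKp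
      haveI h3' : CharP L 3 := hp3 ▸ hLp
      have h3K : (3 : K) = 0 := by exact_mod_cast CharP.cast_eq_zero K 3
      have h3L : (3 : L) = 0 := by exact_mod_cast CharP.cast_eq_zero L 3
      have hfil : Finset.univ.filter (fun x : L => x^q = x ∧ x^2 + x + 1 = 0) = {1} := by
        ext x
        simp only [Finset.mem_filter, Finset.mem_univ, true_and, Finset.mem_singleton]
        constructor
        · rintro ⟨-, h2⟩
          have hsq : (x - 1)^2 = 0 := by linear_combination h2 - x * h3L
          have := pow_eq_zero_iff (by norm_num : (2:ℕ) ≠ 0) |>.mp hsq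
          exact sub_eq_zero.mp this
        · rintro rfl
          exact ⟨one_pow q, by linear_combination h3L⟩
      rw [hfil, Finset.card_singleton]
      have hm30 : (-3 : K) = 0 := by
        rw [show (-3:K) = -(3:K) from by norm_num, h3K, neg_zero]
      rw [hm30, hη0]; norm_num
    · have h3K : (3 : K) ≠ 0 := by
        intro h
        have hd : p ∣ 3 := (CharP.cast_eq_zero_iff K p 3).mp (by exact_mod_cast h)
        exact hp3 ((Nat.prime_dvd_prime_iff_eq hp (by norm_num)).mp hd)
      have h2K : (2 : K) ≠ 0 := by
        intro h
        have hd : p ∣ 2 := (CharP.cast_eq_zero_iff K p 2).mp (by exact_mod_cast h)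
        exact hp2 ((Nat.prime_dvd_prime_iff_eq hp (by norm_num)).mp hd)
      have hm3 : (-3 : K) ≠ 0 := neg_ne_zero.mpr h3K
      by_cases hsq : IsSquare (-3 : K)
      · obtain ⟨s, hs⟩ := hsq
        have hss : s^2 = -3 := by rw [sq]; exact hs.symm
        have hsne : s ≠ 0 := by
          rintro rfl
          exact hm3 (by rw [hs]; ring)
        set u : K := (-1 + s) / 2 with hu
        set v : K := (-1 - s) / 2 with hv
        have h2u : (2:K) * u = -1 + s := by rw [hu]; field_simp
        have h2v : (2:K) * v = -1 - s := by rw [hv]; field_simp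
        have hu2 : u^2 + u + 1 = 0 := by
          have h4 : (2:K)^2 * (u^2 + u + 1) = 0 := by
            linear_combination (2*u+1+s)*h2u + hss
          exact (mul_eq_zero.mp h4).resolve_left (pow_ne_zero 2 h2K)
        have hv2 : v^2 + v + 1 = 0 := by
          have h4 : (2:K)^2 * (v^2 + v + 1) = 0 := by
            linear_combination (2*v+1-s)*h2v + hss
          exact (mul_eq_zero.mp h4).resolve_left (pow_ne_zero 2 h2K)
        have huv : u ≠ v := by
          intro h
          apply hsne
          have h2s : (2:K) * s = 0 := by linear_combination 2*h + h2v - h2u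
          exact (mul_eq_zero.mp h2s).resolve_left h2K
        have huvS : u + v = -1 := by
          apply mul_left_cancel₀ h2K
          linear_combination h2u + h2v
        have huvP : u * v = 1 := by
          apply mul_left_cancel₀ (pow_ne_zero 2 h2K)
          linear_combination (2*v)*h2u + (-1+s)*h2v - hss
        set xu : L := algebraMap K L u with hxu
        set xv : L := algebraMap K L v with hxv
        have hxuv : xu ≠ xv := fun h => huv ((algebraMap K L).injective h)
        have hsum : xu + xv = -1 := by
          rw [hxu, hxv, ← map_add, huvS, map_neg, map_one]
        have hprod : xu * xv = 1 := by
          rw [hxu, hxv, ← map_mul, huvP, map_one]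
        have hxu2 : xu^2 + xu + 1 = 0 := by
          have h := congrArg (algebraMap K L) hu2
          rw [map_add, map_add, map_pow, map_one, map_zero] at h
          exact h
        have hxv2 : xv^2 + xv + 1 = 0 := by
          have h := congrArg (algebraMap K L) hv2
          rw [map_add, map_add, map_pow, map_one, map_zero] at h
          exact h
        have hxuq : xu^q = xu := by rw [hxu, ← map_pow, hpowK]
        have hxvq : xv^q = xv := by rw [hxv, ← map_pow, hpowK]
        have hfil : Finset.univ.filter (fun x : L => x^q = x ∧ x^2 + x + 1 = 0)
            = {xu, xv} := by
          ext x
          simp only [Finset.mem_filter, Finset.mem_univ, true_and, Finset.mem_insert,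
            Finset.mem_singleton]
          constructor
          · rintro ⟨-, hx2⟩
            have hfac : (x - xu) * (x - xv) = 0 := by
              linear_combination hx2 - x*hsum + hprod
            rcases mul_eq_zero.mp hfac with h | h
            · exact Or.inl (sub_eq_zero.mp h)
            · exact Or.inr (sub_eq_zero.mp h)
          · rintro (rfl | rfl)
            · exact ⟨hxuq, hxu2⟩
            · exact ⟨hxvq, hxv2⟩
        rw [hfil, Finset.card_pair hxuv, hη1 _ hm3 ⟨s, hs⟩]
        norm_num
      · have hfil : Finset.univ.filter (fun x : L => x^q = x ∧ x^2 + x + 1 = 0) = ∅ := by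
          ext x
          simp only [Finset.mem_filter, Finset.mem_univ, true_and, Finset.notMem_empty,
            iff_false, not_and]
          intro hxq hx2
          obtain ⟨y, hy⟩ := aux_fixed hq1 hK x hxq
          have hy2 : y^2 + y + 1 = 0 := by
            apply (algebraMap K L).injective
            rw [map_add, map_add, map_pow, map_one, map_zero, hy]
            exact hx2
          exact absurd ⟨2*y+1, by linear_combination (-4)*hy2⟩ hsq
        rw [hfil, Finset.card_empty, hη2 _ hm3 hsq]
        norm_num
  -- assemble
  have hset : {X : L | X ^ (q^2+q+1) = 1 ∧ (X+1)^(q^2+q+1) = -1} = ↑(A ∪ B) := by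
    ext x
    rw [Set.mem_setOf_eq, key x, Finset.coe_union, Set.mem_union, Finset.mem_coe,
      Finset.mem_coe, hmemA, hmemB]
  have hNat : (Nat.card {X : L // X ^ (q ^ 2 + q + 1) = 1 ∧
      (X + 1) ^ (q ^ 2 + q + 1) = -1}) = (A ∪ B).card := by
    have h1 : Nat.card {X : L // X ^ (q ^ 2 + q + 1) = 1 ∧
        (X + 1) ^ (q ^ 2 + q + 1) = -1}
        = Set.ncard {X : L | X ^ (q^2+q+1) = 1 ∧ (X+1)^(q^2+q+1) = -1} :=
      Nat.card_coe_set_eq _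
    rw [h1, hset, Set.ncard_coe_finset]
  have hsum2 := Finset.card_union_add_card_inter A B
  rw [hcardA, hcardB] at hsum2
  rw [hNat]
  have hz : ((A ∪ B).card : ℤ) + ((A ∩ B).card : ℤ) = (q+1) + (q+1) := by
    exact_mod_cast hsum2
  rw [hcardI] at hz
  push_cast
  linarith
end

section
/- Let q be a prime power, and define h(Y,Z) = Y^{q+1} + Y^q Z + Z^{q+1}. Then for X in the algebraic closure of F_q: the element X satisfies h(X,1)·h(1,X) = 0 if and only if X ∈ F_{q³}, N(X) = 1 and N(X+1) = −1, where N is the norm from F_{q³} to F_q. -/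
/-!
Write `v = X + 1`, so that `v ^ q = X ^ q + 1`. If `h(X,1) = 0` then `X ^ q * v = -1` and
`v ^ (q+1) = X`; applying Frobenius once more gives `N(X) = 1` and `N(v) = -1`. Since
`h(1,X) = X ^ (q+1) * h(X⁻¹,1)`, the second factor reduces to the first. Conversely,
`h(X,1) h(1,X) = X^(q+1) v^(q+1) + v^(q+1) + X^(q+1)`, and multiplying by `X^(q²) v^(q²)` turns
this into `N(X) N(v) + N(v) X^(q²) + N(X) v^(q²) = -1 - X^(q²) + X^(q²) + 1 = 0`.
Finally `N(X) = 1` forces `X ^ (q³) = X`, so `X` lies in the field with `q³` elements.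
-/

open Polynomial

theorem mem_range_algebraMap_of_pow_card_eq_self {L E : Type*} [Field L] [Fintype L] [Field E]
    [Algebra L E] {x : E} (hx : x ^ Fintype.card L = x) : x ∈ (algebraMap L E).range := by
  have hsplit : (X ^ Fintype.card L - X : L[X]).Splits := by
    simpa using (FiniteField.isSplittingField_sub L L).splits
  refine hsplit.mem_range_of_isRoot (FiniteField.X_pow_card_sub_X_ne_zero L Fintype.one_lt_card) ?_
  simp [hx]

lemma pow_pow_three_eq_self_of_pow_eq_one {M : Type*} [CommMonoid M] {x : M} {q : ℕ}
    (hx : x ^ (q ^ 2 + q + 1) = 1) : x ^ q ^ 3 = x := by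
  have hexp : q ^ 3 + (q ^ 2 + q + 1) = (q ^ 2 + q + 1) * q + 1 := by ring
  calc x ^ q ^ 3 = x ^ q ^ 3 * x ^ (q ^ 2 + q + 1) := by rw [hx, mul_one]
    _ = (x ^ (q ^ 2 + q + 1)) ^ q * x := by rw [← pow_add, hexp, pow_succ, pow_mul]
    _ = x := by rw [hx, one_pow, one_mul]

section Frobenius

variable {K : Type*} [Field K] {p : ℕ} [ExpChar K p] {k : ℕ} {x : K}

local notation "q" => p ^ k

omit [Field K] in
lemma add_one_pow_expChar_pow {R : Type*} [CommSemiring R] [ExpChar R p] (x : R) :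
    (x + 1) ^ q = x ^ q + 1 := by
  rw [add_pow_expChar_pow, one_pow]

lemma norms_of_left_factor_eq_zero (hx : x ^ (q + 1) + x ^ q + 1 = 0) :
    x ^ (q ^ 2 + q + 1) = 1 ∧ (x + 1) ^ (q ^ 2 + q + 1) = -1 := by
  obtain ⟨v, hv⟩ : ∃ v, v = x + 1 := ⟨_, rfl⟩
  have hvq : v ^ q = x ^ q + 1 := by rw [hv, add_one_pow_expChar_pow]
  have hxv : x ^ q * v = -1 := by rw [hv]; linear_combination hx
  have hxv' : (x ^ q) ^ q * v ^ q = -1 := by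
    rw [← mul_pow, hxv, neg_one_pow_expChar_pow]
  have hv_succ : v ^ (q + 1) = x := by linear_combination v * hvq + hxv + hv
  have hv_succ' : (v ^ (q + 1)) ^ q = x ^ q := by rw [hv_succ]
  have hxx : (x ^ q) ^ q * x = -v := by linear_combination v * hxv' - (x ^ q) ^ q * hv_succ
  exact ⟨by linear_combination x ^ q * hxx - hxv,
    by rw [← hv]; linear_combination v * hv_succ' + hxv⟩

lemma norms_of_right_factor_eq_zero (hx : x ^ (q + 1) + x + 1 = 0) :
    x ^ (q ^ 2 + q + 1) = 1 ∧ (x + 1) ^ (q ^ 2 + q + 1) = -1 := by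
  have hx0 : x ≠ 0 := by rintro rfl; simp at hx
  have hinv : x⁻¹ ^ (q + 1) + x⁻¹ ^ q + 1 = 0 := by
    have : x⁻¹ ^ (q + 1) + x⁻¹ ^ q + 1 = (x ^ (q + 1))⁻¹ * (x ^ (q + 1) + x + 1) := by
      simp only [inv_pow]
      field_simp
      ring
    rw [this, hx, mul_zero]
  obtain ⟨hN, hN1⟩ := norms_of_left_factor_eq_zero hinv
  rw [inv_pow, inv_eq_one] at hN
  refine ⟨hN, ?_⟩
  rwa [show x⁻¹ + 1 = (x + 1) * x⁻¹ by field_simp; ring, mul_pow, inv_pow, hN, inv_one,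
    mul_one] at hN1

lemma left_factor_mul_right_factor (x : K) :
    (x ^ (q + 1) + x ^ q + 1) * (x ^ (q + 1) + x + 1) =
      x ^ (q + 1) * (x + 1) ^ (q + 1) + (x + 1) ^ (q + 1) + x ^ (q + 1) := by
  linear_combination (-(x ^ (q + 1) + 1) * (x + 1)) * add_one_pow_expChar_pow (p := p) (k := k) x

lemma factors_mul_eq_zero_iff_norms (x : K) :
    (x ^ (q + 1) + x ^ q + 1) * (x ^ (q + 1) + x + 1) = 0 ↔
      x ^ (q ^ 2 + q + 1) = 1 ∧ (x + 1) ^ (q ^ 2 + q + 1) = -1 := by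
  refine ⟨fun h ↦ (mul_eq_zero.mp h).elim norms_of_left_factor_eq_zero
    norms_of_right_factor_eq_zero, fun ⟨hN, hN1⟩ ↦ ?_⟩
  have hx0 : x ≠ 0 := by rintro rfl; simp at hN
  have hx1 : x + 1 ≠ 0 := by intro h; simp [h] at hN1
  have hfrob2 : (x + 1) ^ q ^ 2 = x ^ q ^ 2 + 1 := by
    rw [sq, pow_mul, pow_mul, add_one_pow_expChar_pow, add_one_pow_expChar_pow]
  have hmul : (x ^ (q + 1) * (x + 1) ^ (q + 1) + (x + 1) ^ (q + 1) + x ^ (q + 1)) *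
      (x ^ q ^ 2 * (x + 1) ^ q ^ 2) = 0 := by
    linear_combination ((x + 1) ^ (q ^ 2 + q + 1) + (x + 1) ^ q ^ 2) * hN +
      (x ^ q ^ 2 + 1) * hN1 + hfrob2
  rw [left_factor_mul_right_factor]
  exact (mul_eq_zero.mp hmul).resolve_right (by positivity)

end Frobenius

theorem stmt_11_general (p k q : ℕ) (hp : Nat.Prime p) (hq : q = p ^ k)
    (L : Type) [Field L] [Fintype L] (hL : Fintype.card L = q ^ 3)
    (X : AlgebraicClosure L) :
    (X ^ (q + 1) + X ^ q + 1) * (X ^ (q + 1) + X + 1) = 0 ↔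
      ∃ Y : L, algebraMap L (AlgebraicClosure L) Y = X ∧
        Y ^ (q ^ 2 + q + 1) = 1 ∧ (Y + 1) ^ (q ^ 2 + q + 1) = -1 := by
  subst hq
  have : Fact p.Prime := ⟨hp⟩
  have : CharP L p := charP_of_card_eq_prime_pow (by rw [hL, ← pow_mul])
  rw [factors_mul_eq_zero_iff_norms]
  constructor
  · rintro ⟨hN, hN1⟩
    obtain ⟨Y, rfl⟩ := mem_range_algebraMap_of_pow_card_eq_self
      (hL ▸ pow_pow_three_eq_self_of_pow_eq_one hN)
    refine ⟨Y, rfl, ?_, ?_⟩ <;> apply (algebraMap L (AlgebraicClosure L)).injective <;> simpa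
  · rintro ⟨Y, rfl, hN, hN1⟩
    exact ⟨by simpa using congrArg (algebraMap L (AlgebraicClosure L)) hN,
      by simpa using congrArg (algebraMap L (AlgebraicClosure L)) hN1⟩

/-- With `h(Y,Z) = Y^{q+1} + Y^q Z + Z^{q+1}`, an element `X` of the algebraic closure
satisfies `h(X,1)·h(1,X) = 0` iff `X ∈ F_{q³}`, `N(X) = 1` and `N(X+1) = −1`. -/
theorem stmt_11 (p k q : ℕ) (hp : Nat.Prime p) (hk : 0 < k) (hq : q = p ^ k)
    (L : Type) [Field L] [Fintype L] (hL : Fintype.card L = q ^ 3)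
    (X : AlgebraicClosure L) :
    (X ^ (q + 1) + X ^ q + 1) * (X ^ (q + 1) + X + 1) = 0 ↔
      ∃ Y : L, algebraMap L (AlgebraicClosure L) Y = X ∧
        Y ^ (q ^ 2 + q + 1) = 1 ∧ (Y + 1) ^ (q ^ 2 + q + 1) = -1 :=
  stmt_11_general p k q hp hq L hL X
end

section
/- Let q be a prime power not divisible by 3, and X in the algebraic closure of F_q with X^q = −1/(X+1). Then X^{q³} = X; in particular X ∈ F_{q³}. Moreover N(X) = X^{q²+q+1} = 1 and N(X+1) = (X+1)(X^q+1)(X^{q²}+1) = −1. -/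
/-- If `X^q = −1/(X+1)` in the algebraic closure of `F_q` (with `3 ∤ q`), then
`X^{q³} = X` (so `X ∈ F_{q³}`), `N(X) = X^{q²+q+1} = 1`, and
`N(X+1) = (X+1)(X^q+1)(X^{q²}+1) = −1`. -/
theorem stmt_12 (p k q : ℕ) (hp : Nat.Prime p) (hk : 0 < k) (hq : q = p ^ k)
    (h3 : ¬ 3 ∣ q)
    (K : Type) [Field K] [Fintype K] (hK : Fintype.card K = q)
    (Ω : Type) [Field Ω] [IsAlgClosed Ω] [Algebra K Ω]
    (X : Ω) (hX : X ^ q = -(X + 1)⁻¹) :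
    X ^ q ^ 3 = X ∧ X ^ (q ^ 2 + q + 1) = 1 ∧
      (X + 1) * (X ^ q + 1) * (X ^ q ^ 2 + 1) = -1 := by
  -- characteristic of K is p
  have hq0 : q ≠ 0 := by subst hq; exact pow_ne_zero _ hp.pos.ne'
  obtain ⟨r, hr⟩ := CharP.exists K
  haveI := hr
  have hrp : r.Prime := CharP.char_is_prime K r
  obtain ⟨n, -, hcard⟩ := FiniteField.card K r
  have hpr : p = r := by
    have : p ∣ r ^ (n : ℕ) := by
      rw [← hcard, hK, hq]
      exact dvd_pow_self p hk.ne'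
    exact ((Nat.prime_dvd_prime_iff_eq hp hrp).mp (hp.dvd_of_dvd_pow this))
  subst hpr
  haveI : CharP Ω p := charP_of_injective_algebraMap (algebraMap K Ω).injective p
  haveI : ExpChar Ω p := ExpChar.prime hp
  -- Frobenius facts
  have hfrob : ∀ a b : Ω, (a + b) ^ q = a ^ q + b ^ q := by
    intro a b; rw [hq]; exact add_pow_expChar_pow a b p k
  have hneg : ∀ a : Ω, (-a) ^ q = -(a ^ q) := by
    intro a
    have := sub_pow_expChar_pow (0 : Ω) a k (p := p)
    simp only [zero_sub, ← hq] at this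
    rw [this, zero_pow hq0, zero_sub]
  -- basic nonvanishing
  have h1 : X + 1 ≠ 0 := by
    intro h
    rw [h, inv_zero, neg_zero, pow_eq_zero_iff hq0] at hX
    rw [hX] at h; simpa using h
  have hXq : X ^ q * (X + 1) = -1 := by
    rw [hX]; field_simp
  have hX0 : X ≠ 0 := by
    intro h
    rw [h, zero_pow hq0, zero_mul] at hXq
    simpa using hXq
  have h2 : X ^ q + 1 ≠ 0 := by
    intro h
    apply hX0
    have hq1 : X ^ q = -1 := by linear_combination h
    linear_combination hq1 * (X + 1) - hXq
  -- second Frobenius iterate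
  have hXq2 : X ^ q ^ 2 = -(X + 1) / X := by
    have e1 : X ^ q ^ 2 = (X ^ q) ^ q := by rw [← pow_mul, pow_two]
    rw [e1, hX, hneg, inv_pow, hfrob, one_pow, hX]
    field_simp
    rw [show (-1 + (X + 1)) = X by ring, div_self hX0]
  have e2 : X ^ q ^ 3 = (X ^ q ^ 2) ^ q := by rw [← pow_mul, ← pow_succ]
  have hXq3 : X ^ q ^ 3 = X := by
    rw [e2, hXq2, div_pow, hneg, hfrob, one_pow, hX]
    rw [div_eq_iff (by simpa using inv_ne_zero h1)]
    field_simp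
    ring
  refine ⟨hXq3, ?_, ?_⟩
  · have : X ^ (q ^ 2 + q + 1) = X ^ q ^ 2 * X ^ q * X := by ring
    rw [this, hXq2, hX]
    field_simp
  · rw [hXq2, hX]
    field_simp
    ring
end

section
/- Let q be a prime power and A ≠ B ∈ F_{q³} with N(A) = N(B) = 1, where N is the norm from F_{q³} to F_q, and suppose A^{q+1} ≠ B^{q+1}. Set h(Y,Z) = Y^{q+1} + Y^q Z + Z^{q+1} and X₁ = (−A^{q+1}B + AB^{q+1})/(A^{q+1} − B^{q+1}). Then h(X₁, A) = 0 and h(X₁, B) = 0. -/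
/-!
Write `σ x = x ^ q`, a ring endomorphism of `L`. The norm condition says `σ (A ^ (q + 1)) = A⁻¹`,
so applying `σ` to `X₁` gives `X₁ ^ q = (A ^ (q + 1) - B ^ (q + 1)) / (B - A)`. On the other hand
`X₁ + A = A ^ (q + 1) * (A - B) / (A ^ (q + 1) - B ^ (q + 1))`, hence
`X₁ ^ q * (X₁ + A) = -A ^ (q + 1)`, which is `h(X₁, A) = 0`. As `X₁` is symmetric in `A` and `B`,
the same holds for `B`.
-/

theorem FiniteField.exists_ringHom_eq_pow_of_dvd_card {K : Type*} [Field K] [Fintype K] {q : ℕ}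
    (hq : q ∣ Fintype.card K) : ∃ σ : K →+* K, ∀ x, σ x = x ^ q := by
  obtain ⟨p, hchar, n, hp, hcard⟩ := FiniteField.card' K
  obtain ⟨m, -, rfl⟩ := (Nat.dvd_prime_pow hp).1 (hcard ▸ hq)
  have := Fact.mk hp
  exact ⟨iterateFrobenius K p m, iterateFrobenius_def p m⟩

section CommonRoot

variable {K : Type*} [Field K] (σ : K →+* K) {A B : K}

def commonRoot (A B : K) : K :=
  (-(σ A * A) * B + A * (σ B * B)) / (σ A * A - σ B * B)

theorem commonRoot_comm (A B : K) : commonRoot σ A B = commonRoot σ B A := by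
  rw [commonRoot, commonRoot, ← neg_div_neg_eq]
  congr 1 <;> ring

theorem map_mul_self_eq_inv_of_norm_eq_one (hA : σ (σ A) * σ A * A = 1) :
    σ (σ A * A) = A⁻¹ :=
  eq_inv_of_mul_eq_one_left (by rwa [map_mul])

theorem map_commonRoot (hA : σ (σ A) * σ A * A = 1) (hB : σ (σ B) * σ B * B = 1) (hAB : A ≠ B) :
    σ (commonRoot σ A B) = (σ A * A - σ B * B) / (B - A) := by
  have hA₀ : A ≠ 0 := right_ne_zero_of_mul_eq_one hA
  have hB₀ : B ≠ 0 := right_ne_zero_of_mul_eq_one hB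
  rw [commonRoot, map_div₀, map_add, map_sub, map_mul, map_mul, map_neg,
    map_mul_self_eq_inv_of_norm_eq_one σ hA, map_mul_self_eq_inv_of_norm_eq_one σ hB,
    div_eq_div_iff (by rwa [sub_ne_zero, ne_eq, inv_inj]) (sub_ne_zero.2 hAB.symm)]
  field_simp
  ring

theorem commonRoot_isRoot_left (hA : σ (σ A) * σ A * A = 1) (hB : σ (σ B) * σ B * B = 1)
    (hAB : A ≠ B) (hD : σ A * A ≠ σ B * B) :
    σ (commonRoot σ A B) * commonRoot σ A B + σ (commonRoot σ A B) * A + σ A * A = 0 := by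
  rw [map_commonRoot σ hA hB hAB, commonRoot]
  have := sub_ne_zero.2 hD
  have := sub_ne_zero.2 hAB.symm
  field_simp
  ring

end CommonRoot

theorem stmt_16_general (q : ℕ)
    (L : Type) [Field L] [Fintype L] (hL : Fintype.card L = q ^ 3)
    (A B : L) (hAB : A ≠ B)
    (hA : A ^ (q ^ 2 + q + 1) = 1) (hB : B ^ (q ^ 2 + q + 1) = 1)
    (hpow : A ^ (q + 1) ≠ B ^ (q + 1))
    (X₁ : L) (hX₁ : X₁ = (-(A ^ (q + 1)) * B + A * B ^ (q + 1)) / (A ^ (q + 1) - B ^ (q + 1))) :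
    X₁ ^ (q + 1) + X₁ ^ q * A + A ^ (q + 1) = 0 ∧
      X₁ ^ (q + 1) + X₁ ^ q * B + B ^ (q + 1) = 0 := by
  obtain ⟨σ, hσ⟩ := FiniteField.exists_ringHom_eq_pow_of_dvd_card (hL ▸ dvd_pow_self q three_ne_zero)
  have hsucc : ∀ x : L, x ^ (q + 1) = σ x * x := fun x ↦ by rw [hσ, pow_succ]
  have hnorm : ∀ x : L, x ^ (q ^ 2 + q + 1) = σ (σ x) * σ x * x := fun x ↦ by
    rw [hσ, hσ, ← pow_mul, ← pow_add, ← pow_succ, sq]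
  simp only [hsucc, hnorm] at hA hB hpow hX₁ ⊢
  rw [← hσ]
  change X₁ = commonRoot σ A B at hX₁
  subst hX₁
  refine ⟨commonRoot_isRoot_left σ hA hB hAB hpow, ?_⟩
  rw [commonRoot_comm]
  exact commonRoot_isRoot_left σ hB hA hAB.symm hpow.symm

/-- With `h(Y,Z) = Y^{q+1} + Y^q Z + Z^{q+1}` and
`X₁ = (−A^{q+1}B + AB^{q+1})/(A^{q+1} − B^{q+1})`, we have `h(X₁,A) = h(X₁,B) = 0`. -/
theorem stmt_16 (p k q : ℕ) (hp : Nat.Prime p) (hk : 0 < k) (hq : q = p ^ k)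
    (L : Type) [Field L] [Fintype L] (hL : Fintype.card L = q ^ 3)
    (A B : L) (hAB : A ≠ B)
    (hA : A ^ (q ^ 2 + q + 1) = 1) (hB : B ^ (q ^ 2 + q + 1) = 1)
    (hpow : A ^ (q + 1) ≠ B ^ (q + 1))
    (X₁ : L) (hX₁ : X₁ = (-(A ^ (q + 1)) * B + A * B ^ (q + 1)) / (A ^ (q + 1) - B ^ (q + 1))) :
    X₁ ^ (q + 1) + X₁ ^ q * A + A ^ (q + 1) = 0 ∧
      X₁ ^ (q + 1) + X₁ ^ q * B + B ^ (q + 1) = 0 :=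
  stmt_16_general q L hL A B hAB hA hB hpow X₁ hX₁
end

section
/- Let q be a prime power and A ≠ B ∈ F_{q³} with N(A) = N(B) = 1 (N the norm from F_{q³} to F_q), and suppose A^q ≠ B^q. Set h(Y,Z) = Y^{q+1} + Y^q Z + Z^{q+1} and X₂ = (A^{q+1} − B^{q+1})/(B^q − A^q). Then h(A, X₂) = 0 and h(B, X₂) = 0. -/
theorem stmt_17_aux {F : Type*} [Field F] (a b aq bq c d : F)
    (h1 : c * aq * a = 1) (h2 : d * bq * b = 1)
    (hd : bq - aq ≠ 0) (hd2 : d - c ≠ 0) :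
    a * aq + aq * ((a * aq - b * bq) / (bq - aq)) +
        (aq * c - bq * d) / (d - c) * ((a * aq - b * bq) / (bq - aq)) = 0 ∧
      b * bq + bq * ((a * aq - b * bq) / (bq - aq)) +
        (aq * c - bq * d) / (d - c) * ((a * aq - b * bq) / (bq - aq)) = 0 := by
  constructor
  · field_simp
    linear_combination (aq - bq) * (h1 - h2)
  · field_simp
    linear_combination (aq - bq) * (h1 - h2)

/-- With `h(Y,Z) = Y^{q+1} + Y^q Z + Z^{q+1}` and
`X₂ = (A^{q+1} − B^{q+1})/(B^q − A^q)`, we have `h(A,X₂) = h(B,X₂) = 0`. -/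
theorem stmt_17 (p k q : ℕ) (hp : Nat.Prime p) (hk : 0 < k) (hq : q = p ^ k)
    (L : Type) [Field L] [Fintype L] (hL : Fintype.card L = q ^ 3)
    (A B : L) (hAB : A ≠ B)
    (hA : A ^ (q ^ 2 + q + 1) = 1) (hB : B ^ (q ^ 2 + q + 1) = 1)
    (hpow : A ^ q ≠ B ^ q)
    (X₂ : L) (hX₂ : X₂ = (A ^ (q + 1) - B ^ (q + 1)) / (B ^ q - A ^ q)) :
    A ^ (q + 1) + A ^ q * X₂ + X₂ ^ (q + 1) = 0 ∧
      B ^ (q + 1) + B ^ q * X₂ + X₂ ^ (q + 1) = 0 := by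
  haveI : Fact p.Prime := ⟨hp⟩
  -- characteristic of L is p
  obtain ⟨n, hr, hcard⟩ := FiniteField.card L (ringChar L)
  have hrp : ringChar L = p := by
    have hdvd : ringChar L ∣ p ^ (3 * k) := by
      have hc : Fintype.card L = p ^ (3 * k) := by
        rw [hL, hq, ← pow_mul, Nat.mul_comm]
      rw [← hc, hcard]
      exact dvd_pow_self _ n.pos.ne'
    exact (Nat.prime_dvd_prime_iff_eq hr hp).mp (hr.dvd_of_dvd_pow hdvd)
  haveI : CharP L p := ringChar.of_eq hrp
  -- the Frobenius x ↦ x^q is a ring hom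
  set φ : L →+* L := iterateFrobenius L p k with hφ
  have hφx : ∀ x : L, φ x = x ^ q := fun x => by rw [hφ, iterateFrobenius_def, hq]
  -- basic nonvanishing
  have hA0 : A ≠ 0 := by
    intro h; rw [h, zero_pow (by positivity)] at hA; exact zero_ne_one hA
  have hB0 : B ≠ 0 := by
    intro h; rw [h, zero_pow (by positivity)] at hB; exact zero_ne_one hB
  set aq := A ^ q with haq
  set bq := B ^ q with hbq
  have hd : bq - aq ≠ 0 := sub_ne_zero.mpr (Ne.symm hpow)
  have hd2 : bq ^ q - aq ^ q ≠ 0 := by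
    refine sub_ne_zero.mpr fun h => hd (sub_eq_zero.mpr ?_)
    exact φ.injective (by rw [hφx, hφx]; exact h)
  -- norm relations
  have h1 : aq ^ q * aq * A = 1 := by
    rw [haq, ← pow_mul, ← pow_add, ← pow_succ, ← sq]; exact hA
  have h2 : bq ^ q * bq * B = 1 := by
    rw [hbq, ← pow_mul, ← pow_add, ← pow_succ, ← sq]; exact hB
  -- rewrite X₂ and X₂^q
  have hX : X₂ = (A * aq - B * bq) / (bq - aq) := by
    rw [hX₂, pow_succ, pow_succ, mul_comm (A^q) A, mul_comm (B^q) B]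
  have hXq : X₂ ^ q = (aq * aq ^ q - bq * bq ^ q) / (bq ^ q - aq ^ q) := by
    have : X₂ ^ q = φ X₂ := (hφx X₂).symm
    rw [this, hX, map_div₀, map_sub, map_sub, map_mul, map_mul, hφx, hφx, hφx, hφx,
      ← haq, ← hbq]
  have hXpow : X₂ ^ (q + 1) = X₂ ^ q * X₂ := pow_succ X₂ q
  constructor
  · rw [pow_succ, mul_comm aq A, hXpow, hXq, hX]
    exact (stmt_17_aux A B aq bq (aq ^ q) (bq ^ q) h1 h2 hd hd2).1
  · rw [pow_succ, mul_comm bq B, hXpow, hXq, hX]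
    exact (stmt_17_aux A B aq bq (aq ^ q) (bq ^ q) h1 h2 hd hd2).2
end

section
/- Let q be a field element setting: for c₁, c₂ in F_q*, the quartic polynomial L(b) = b⁴ + 2(c₁−c₂−1)b³ + ((1+c₁−c₂)² − 6c₁)b² + 2c₁(1−c₁−c₂)b + c₁² over F_q (q odd) is the square of a monic quadratic polynomial (b² + α₁b + α₀)² for some α₁, α₀ ∈ F_q if and only if (c₁, c₂) = (1, −1), in which case L(b) = (b² + b + 1)². -/
/-!
Comparing coefficients with `(X² + aX + b)²`, the `X³` and `X²` coefficients determine
`a = c₁ - c₂ - 1` and `b = -c₁ - 2c₂` (this is where `2 ≠ 0`, i.e. odd `q`, enters). The constant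
term then reads `4c₂(c₁ + c₂) = 0`, so `c₂ = -c₁`, and the `X` coefficient becomes
`4c₁(c₁ - 1) = 0`, so `c₁ = 1`.
-/

open Polynomial

theorem two_ne_zero_of_odd_card {F : Type*} [Field F] [Fintype F] (h : Odd (Fintype.card F)) :
    (2 : F) ≠ 0 :=
  Ring.two_ne_zero fun hF ↦ Nat.not_even_iff_odd.mpr h
    (Nat.even_iff.mpr (FiniteField.even_card_iff_char_two.mp hF))

theorem monic_quadratic_sq {R : Type*} [CommRing R] (a b : R) :
    (X ^ 2 + C a * X + C b) ^ 2 = X ^ 4 + C (2 * a) * X ^ 3 + C (a ^ 2 + 2 * b) * X ^ 2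
      + C (2 * a * b) * X + C (b ^ 2) := by
  simp only [C_mul, C_add, C_pow, C_ofNat]
  ring

theorem monic_quartic_eq_iff {R : Type*} [CommRing R] {a₃ a₂ a₁ a₀ b₃ b₂ b₁ b₀ : R} :
    X ^ 4 + C a₃ * X ^ 3 + C a₂ * X ^ 2 + C a₁ * X + C a₀
      = X ^ 4 + C b₃ * X ^ 3 + C b₂ * X ^ 2 + C b₁ * X + C b₀ ↔
      a₃ = b₃ ∧ a₂ = b₂ ∧ a₁ = b₁ ∧ a₀ = b₀ := by
  refine ⟨fun h ↦ ?_, by rintro ⟨rfl, rfl, rfl, rfl⟩; rfl⟩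
  have hcoeff (n : ℕ) := congrArg (coeff · n) h
  simp only [coeff_add, coeff_C_mul, coeff_X_pow, coeff_X, coeff_C] at hcoeff
  exact ⟨by simpa using hcoeff 3, by simpa using hcoeff 2, by simpa using hcoeff 1,
    by simpa using hcoeff 0⟩

theorem eq_one_and_eq_neg_one_of_coeff_eq {K : Type*} [Field K] (h2 : (2 : K) ≠ 0)
    {c₁ c₂ a b : K} (hc₁ : c₁ ≠ 0) (hc₂ : c₂ ≠ 0)
    (h₃ : 2 * (c₁ - c₂ - 1) = 2 * a) (h₂ : (1 + c₁ - c₂) ^ 2 - 6 * c₁ = a ^ 2 + 2 * b)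
    (h₁ : 2 * c₁ * (1 - c₁ - c₂) = 2 * a * b) (h₀ : c₁ ^ 2 = b ^ 2) :
    c₁ = 1 ∧ c₂ = -1 := by
  obtain rfl : a = c₁ - c₂ - 1 := (mul_left_cancel₀ h2 h₃).symm
  obtain rfl : b = -c₁ - 2 * c₂ := mul_left_cancel₀ h2 (by linear_combination -h₂)
  have hsum : c₁ + c₂ = 0 := by
    have : 2 * 2 * c₂ * (c₁ + c₂) = 0 := by linear_combination -h₀
    simpa [h2, hc₂] using this
  obtain rfl : c₂ = -c₁ := by linear_combination hsum
  have : 2 * 2 * c₁ * (c₁ - 1) = 0 := by linear_combination -h₁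
  have hc : c₁ - 1 = 0 := by simpa [h2, hc₁] using this
  exact ⟨by linear_combination hc, by linear_combination -hc⟩

theorem stmt_18_general
    (q : ℕ)
    (hodd : Odd q)
    (K : Type) [Field K] [Fintype K] (hK : Fintype.card K = q)
    (c₁ c₂ : K) (hc₁ : c₁ ≠ 0) (hc₂ : c₂ ≠ 0)
    (f : Polynomial K)
    (hf : f = Polynomial.X ^ 4 + Polynomial.C (2 * (c₁ - c₂ - 1)) * Polynomial.X ^ 3
            + Polynomial.C ((1 + c₁ - c₂) ^ 2 - 6 * c₁) * Polynomial.X ^ 2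
            + Polynomial.C (2 * c₁ * (1 - c₁ - c₂)) * Polynomial.X
            + Polynomial.C (c₁ ^ 2)) :
    ((∃ α₁ α₀ : K,
        f = (Polynomial.X ^ 2 + Polynomial.C α₁ * Polynomial.X + Polynomial.C α₀) ^ 2)
      ↔ (c₁ = 1 ∧ c₂ = -1))
    ∧ (c₁ = 1 → c₂ = -1 →
        f = (Polynomial.X ^ 2 + Polynomial.X + 1) ^ 2) := by
  have hsq : c₁ = 1 → c₂ = -1 → f = (X ^ 2 + C 1 * X + C 1) ^ 2 := by
    rintro rfl rfl
    rw [hf, monic_quadratic_sq, monic_quartic_eq_iff]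
    norm_num
  refine ⟨⟨?_, fun ⟨h₁, h₂⟩ ↦ ⟨1, 1, hsq h₁ h₂⟩⟩, by simpa using hsq⟩
  rintro ⟨α₁, α₀, h⟩
  rw [hf, monic_quadratic_sq, monic_quartic_eq_iff] at h
  obtain ⟨h₃, h₂, h₁, h₀⟩ := h
  exact eq_one_and_eq_neg_one_of_coeff_eq (two_ne_zero_of_odd_card (hK ▸ hodd)) hc₁ hc₂
    h₃ h₂ h₁ h₀

/-- The quartic `L(b) = b⁴ + 2(c₁−c₂−1)b³ + ((1+c₁−c₂)² − 6c₁)b² + 2c₁(1−c₁−c₂)b + c₁²`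
over `F_q` (`q` odd) is the square of a monic quadratic iff `(c₁,c₂) = (1,−1)`, in which
case `L(b) = (b² + b + 1)²`. -/
theorem stmt_18 (p k q : ℕ) (hp : Nat.Prime p) (hk : 0 < k) (hq : q = p ^ k)
    (hodd : Odd q)
    (K : Type) [Field K] [Fintype K] (hK : Fintype.card K = q)
    (c₁ c₂ : K) (hc₁ : c₁ ≠ 0) (hc₂ : c₂ ≠ 0)
    (f : Polynomial K)
    (hf : f = Polynomial.X ^ 4 + Polynomial.C (2 * (c₁ - c₂ - 1)) * Polynomial.X ^ 3
            + Polynomial.C ((1 + c₁ - c₂) ^ 2 - 6 * c₁) * Polynomial.X ^ 2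
            + Polynomial.C (2 * c₁ * (1 - c₁ - c₂)) * Polynomial.X
            + Polynomial.C (c₁ ^ 2)) :
    ((∃ α₁ α₀ : K,
        f = (Polynomial.X ^ 2 + Polynomial.C α₁ * Polynomial.X + Polynomial.C α₀) ^ 2)
      ↔ (c₁ = 1 ∧ c₂ = -1))
    ∧ (c₁ = 1 → c₂ = -1 →
        f = (Polynomial.X ^ 2 + Polynomial.X + 1) ^ 2) :=
  stmt_18_general q hodd K hK c₁ c₂ hc₁ hc₂ f hf
end
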